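/- Suppose a real function F in the modulation space M¹₂(ℝ^{2n}) with finite covariance matrix satisfies the refined Robertson–Schrödinger uncertainty principle: Cov(F) + (iħ/2)J ≥ 𝒫[F]·( Cov(|F̃|²) + (1/4)Cov(|𝓕_σF̃|²) + (iħ/2)J ) ≥ 0. Then for every S in ASp(n) (i.e. every real 2n×2n matrix with SᵀJS = J or SᵀJS = −J), the function F∘S also satisfies the refined Robertson–Schrödinger uncertainty principle. -/

import Mathlib

open MeasureTheory Matrix Complex Real
open scoped BigOperators ComplexConjugate ComplexOrder

noncomputable section

namespace RSUP

/-- Phase space `ℝ^{2n}`. -/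
abbrev PS (n : ℕ) := Fin (2*n) → ℝ

/-- Configuration space `ℝⁿ`. -/
abbrev CS (n : ℕ) := Fin n → ℝ

/-- The standard symplectic matrix `J = [[0, I],[−I, 0]]`. -/
def J (n : ℕ) : Matrix (Fin (2*n)) (Fin (2*n)) ℝ :=
  Matrix.of fun i j =>
    if (i : ℕ) + n = (j : ℕ) then 1 else if (j : ℕ) + n = (i : ℕ) then -1 else 0

/-- `J` as a complex matrix. -/
def Jc (n : ℕ) : Matrix (Fin (2*n)) (Fin (2*n)) ℂ := (J n).map (fun x => (x : ℂ))

/-- The standard symplectic form `σ(z,w) = z ⬝ Jᵀ w = p·x' − x·p'`. -/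
def symplForm (n : ℕ) (z w : PS n) : ℝ := z ⬝ᵥ ((J n)ᵀ *ᵥ w)

/-- The symplectic Fourier transform `(𝓕_σ F)(ζ) = (2πhb)^{−n} ∫ F(z) e^{−(i/hb)σ(ζ,z)} dz`. -/
def symplFT (n : ℕ) (hb : ℝ) (F : PS n → ℂ) : PS n → ℂ := fun ζ =>
  ((2 * π * hb) ^ n)⁻¹ • ∫ z : PS n, F z * Complex.exp (-(Complex.I / (hb:ℂ)) * ((symplForm n ζ z : ℝ) : ℂ))

/-- The hb-scaled Fourier transform on phase space,
`(𝓕_hb F)(ζ) = (2πhb)^{−n} ∫ F(z) e^{−(i/hb) z·ζ} dz`. -/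
def hbarFT (n : ℕ) (hb : ℝ) (F : PS n → ℂ) : PS n → ℂ := fun ζ =>
  ((2 * π * hb) ^ n)⁻¹ • ∫ z : PS n, F z * Complex.exp (-(Complex.I / (hb:ℂ)) * (((∑ i, z i * ζ i) : ℝ) : ℂ))

/-- The Plancherel–Fourier transform on `ℝ^d`. -/
def FT {d : ℕ} (F : (Fin d → ℝ) → ℂ) : (Fin d → ℝ) → ℂ := fun ω =>
  ∫ x : Fin d → ℝ, F x * Complex.exp (-(2 * π * Complex.I) * (((∑ i, x i * ω i) : ℝ) : ℂ))

/-- Membership in the modulation space `M¹₂(ℝ^d)`: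
`F ∈ L²` and `∫ (1+|z|²)(|F(z)|² + |𝓕F(z)|²) dz < ∞`. -/
def InM12 {d : ℕ} (F : (Fin d → ℝ) → ℂ) : Prop :=
  MemLp F 2 (volume : Measure (Fin d → ℝ)) ∧
  Integrable (fun z : Fin d → ℝ => (1 + ∑ i, z i ^ 2) * (‖F z‖ ^ 2 + ‖FT F z‖ ^ 2)) volume

/-- The mean vector `⟨z⟩_F = ∫ z F(z) dz / ∫ F(z) dz`. -/
def meanVec {d : ℕ} (F : (Fin d → ℝ) → ℝ) : Fin d → ℝ := fun i =>
  (∫ z : Fin d → ℝ, z i * F z) / (∫ z : Fin d → ℝ, F z)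

/-- The covariance matrix `Cov(F) = ∫ (z−⟨z⟩)(z−⟨z⟩)ᵀ F(z) dz / ∫ F(z) dz`. -/
def Cov {d : ℕ} (F : (Fin d → ℝ) → ℝ) : Matrix (Fin d) (Fin d) ℝ :=
  Matrix.of fun i j =>
    (∫ z : Fin d → ℝ, (z i - meanVec F i) * (z j - meanVec F j) * F z) / (∫ z : Fin d → ℝ, F z)

/-- Finiteness of the covariance matrix of `F` (integrability of all second moments). -/
def HasFiniteCov {d : ℕ} (F : (Fin d → ℝ) → ℝ) : Prop :=
  Integrable F (volume : Measure (Fin d → ℝ)) ∧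
  (∀ i, Integrable (fun z : Fin d → ℝ => z i * F z) volume) ∧
  (∀ i j, Integrable (fun z : Fin d → ℝ => z i * z j * F z) volume)

/-- The purity `𝒫[F] = (2πhb)ⁿ ∫ F(z)² dz`. -/
def purity (n : ℕ) (hb : ℝ) (F : PS n → ℝ) : ℝ := (2 * π * hb) ^ n * ∫ z : PS n, F z ^ 2

/-- `|F̃|²`, the probability density obtained by `L²`-normalizing `F` and squaring. -/
def normSq2 {d : ℕ} (F : (Fin d → ℝ) → ℝ) : (Fin d → ℝ) → ℝ := fun z =>
  F z ^ 2 / ∫ w : Fin d → ℝ, F w ^ 2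

/-- `|𝓕_σ F̃|²`, where `F̃ = F/‖F‖_{L²}`. -/
def nFTsq (n : ℕ) (hb : ℝ) (F : PS n → ℝ) : PS n → ℝ := fun z =>
  ‖symplFT n hb (fun w => (F w : ℂ)) z‖ ^ 2 / ∫ w : PS n, F w ^ 2

/-- `|𝓕_hb F̃|²`, where `F̃ = F/‖F‖_{L²}`. -/
def nhFTsq (n : ℕ) (hb : ℝ) (F : PS n → ℝ) : PS n → ℝ := fun z =>
  ‖hbarFT n hb (fun w => (F w : ℂ)) z‖ ^ 2 / ∫ w : PS n, F w ^ 2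

/-- The Hermitian matrix `A + (ihb/2) J` on `ℂ^{2n}`. -/
def RSmat (n : ℕ) (hb : ℝ) (A : Matrix (Fin (2*n)) (Fin (2*n)) ℝ) :
    Matrix (Fin (2*n)) (Fin (2*n)) ℂ :=
  A.map (fun x => (x : ℂ)) + (hb / 2) • Complex.I • Jc n

/-- The right-hand side of the refined Robertson–Schrödinger uncertainty principle,
`𝒫[F] ( Cov(|F̃|²) + ¼ Cov(|𝓕_σF̃|²) + (ihb/2)J )`. -/
def refinedMat (n : ℕ) (hb : ℝ) (F : PS n → ℝ) : Matrix (Fin (2*n)) (Fin (2*n)) ℂ :=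
  purity n hb F • RSmat n hb (Cov (normSq2 F) + (4 : ℝ)⁻¹ • Cov (nFTsq n hb F))

/-- The refined Robertson–Schrödinger uncertainty principle for `F`:
`Cov(F) + (ihb/2)J ≥ 𝒫[F](Cov(|F̃|²) + ¼ Cov(|𝓕_σF̃|²) + (ihb/2)J) ≥ 0`. -/
def SatisfiesRefinedRSUP (n : ℕ) (hb : ℝ) (F : PS n → ℝ) : Prop :=
  (RSmat n hb (Cov F) - refinedMat n hb F).PosSemidef ∧ (refinedMat n hb F).PosSemidef

/-- The position part of a phase space point. -/
def xpart {n : ℕ} (z : PS n) : CS n := fun i => z ⟨i.val, by have := i.isLt; omega⟩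

/-- The momentum part of a phase space point. -/
def ppart {n : ℕ} (z : PS n) : CS n := fun i => z ⟨n + i.val, by have := i.isLt; omega⟩

/-- The Wigner transform of a pure state `f`:
`Wf(x,p) = (2πhb)^{−n} ∫ f(x+y/2) conj(f(x−y/2)) e^{−(i/hb)p·y} dy`. -/
def Wig (n : ℕ) (hb : ℝ) (f : CS n → ℂ) : PS n → ℂ := fun z =>
  ((2 * π * hb) ^ n)⁻¹ • ∫ y : CS n,
    f (xpart z + (2 : ℝ)⁻¹ • y) * (starRingEnd ℂ) (f (xpart z - (2 : ℝ)⁻¹ • y)) *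
      Complex.exp (-(Complex.I / (hb:ℂ)) * (((∑ i, ppart z i * y i) : ℝ) : ℂ))

/-- A density matrix (positive self-adjoint trace-class operator on `L²(ℝⁿ)` of unit trace),
presented through its spectral decomposition `ρ̂ = Σ_k p_k |f_k⟩⟨f_k|` with `p_k ≥ 0`,
`Σ_k p_k = 1` and `(f_k)` orthonormal in `L²(ℝⁿ)`. -/
structure DensityOp (n : ℕ) where
  p : ℕ → ℝ
  f : ℕ → CS n → ℂ
  p_nonneg : ∀ k, 0 ≤ p k
  p_sum : HasSum p 1
  f_L2 : ∀ k, MemLp (f k) 2 (volume : Measure (CS n))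
  f_ortho : ∀ k l, ∫ x : CS n, (starRingEnd ℂ) (f k x) * f l x = if k = l then 1 else 0

/-- The Wigner distribution of a density matrix, `Wρ = Σ_k p_k W f_k`. -/
def WigMix (n : ℕ) (hb : ℝ) (ρ : DensityOp n) : PS n → ℂ := fun z =>
  ∑' k, (ρ.p k : ℂ) * Wig n hb (ρ.f k) z

/-- The state is pure, i.e. `ρ̂` is a rank-one orthogonal projection. -/
def DensityOp.IsPure {n : ℕ} (ρ : DensityOp n) : Prop := ∃ k, ρ.p k = 1

/-- `W` is the Wigner distribution of the density matrix `ρ`, is real,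
belongs to the modulation space `M¹₂(ℝ^{2n})` and has finite covariance matrix. -/
def IsWignerOf (n : ℕ) (hb : ℝ) (ρ : DensityOp n) (W : PS n → ℝ) : Prop :=
  (∀ z, WigMix n hb ρ z = (W z : ℂ)) ∧ InM12 (fun z => (W z : ℂ)) ∧ HasFiniteCov W

/-- The Boltzmann entropy `E(μ) = −∫ μ log μ`. -/
def entropy {d : ℕ} (μ : (Fin d → ℝ) → ℝ) : ℝ := -∫ z : Fin d → ℝ, μ z * Real.log (μ z)

/-- The Gaussian pure-state Wigner function with covariance matrix `B` centered at `z₀`. -/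
def gaussW (n : ℕ) (hb : ℝ) (B : Matrix (Fin (2*n)) (Fin (2*n)) ℝ) (z₀ : PS n) : PS n → ℝ :=
  fun z => ((π * hb) ^ n)⁻¹ * Real.exp (-(2:ℝ)⁻¹ * ((z - z₀) ⬝ᵥ (B⁻¹ *ᵥ (z - z₀))))

/-- `S ∈ Sp(n)`: `S` is a symplectic matrix. -/
def IsSymplectic (n : ℕ) (S : Matrix (Fin (2*n)) (Fin (2*n)) ℝ) : Prop :=
  Sᵀ * J n * S = J n

/-- The smallest symplectic eigenvalue of `B`: the smallest modulus of an eigenvalue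
of `B J⁻¹`. -/
def minSymplEig (n : ℕ) (B : Matrix (Fin (2*n)) (Fin (2*n)) ℝ) : ℝ :=
  sInf ((fun z : ℂ => ‖z‖) '' spectrum ℂ ((B * (J n)⁻¹).map (fun x => (x : ℂ))))

end RSUP

open RSUP MeasureTheory Matrix

/-!
Since `Sᵀ J S = ±J`, `|det S| = 1`, so `z ↦ S z` preserves Lebesgue measure: the purity and
`‖F‖₂` do not change, and every covariance matrix with finite second moments transforms by the
congruence `Cov ↦ S⁻¹ Cov S⁻ᵀ`. The second moments of `|F̃|²` and `|𝓕_σF̃|²` are finite because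
`F ∈ M¹₂`. The same relation makes `𝓕_σ(F ∘ S)` equal to `𝓕_σF ∘ S` or to its complex conjugate,
so `|𝓕_σ(F ∘ S)~|² = |𝓕_σF̃|² ∘ S`. Finally `P = S⁻¹` satisfies `P J Pᵀ = ±J`, so both matrices
of the refined inequality are conjugated by `P` (after a transposition when the sign is `−`),
which preserves positive semidefiniteness.
-/

namespace RSUP

section SymplecticMatrix

def blockEquiv (n : ℕ) : Fin n ⊕ Fin n ≃ Fin (2 * n) :=
  finSumFinEquiv.trans (finCongr (two_mul n).symm)

theorem J_eq_neg_reindex (n : ℕ) :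
    J n = -reindex (blockEquiv n) (blockEquiv n) (Matrix.J (Fin n) ℝ) := by
  have hl (a : Fin n) : (blockEquiv n (.inl a) : ℕ) = a := rfl
  have hr (a : Fin n) : (blockEquiv n (.inr a) : ℕ) = n + a := rfl
  ext i j
  obtain ⟨a | a, rfl⟩ := (blockEquiv n).surjective i <;>
  obtain ⟨b | b, rfl⟩ := (blockEquiv n).surjective j <;>
  simp only [J, Matrix.J, of_apply, hl, hr, reindex_apply, Matrix.neg_apply, submatrix_apply,
    Equiv.symm_apply_apply, fromBlocks_apply₁₁, fromBlocks_apply₁₂, fromBlocks_apply₂₁,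
    fromBlocks_apply₂₂, Matrix.zero_apply, one_apply, Fin.ext_iff] <;> grind

theorem J_mul_J (n : ℕ) : J n * J n = -1 := by
  rw [J_eq_neg_reindex, neg_mul_neg, reindex_apply, submatrix_mul_equiv, J_squared]
  ext i j
  simp [one_apply]

theorem J_transpose (n : ℕ) : (J n)ᵀ = -J n := by
  rw [J_eq_neg_reindex, transpose_neg, transpose_reindex, Matrix.J_transpose]
  simp [reindex_apply, submatrix_neg]

theorem isUnit_det_J (n : ℕ) : IsUnit (J n).det := by
  rw [J_eq_neg_reindex, det_neg, det_reindex_self]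
  exact (isUnit_neg_one.pow _).mul (Matrix.isUnit_det_J _ _)

theorem J_inv (n : ℕ) : (J n)⁻¹ = -J n :=
  inv_eq_right_inv (by rw [mul_neg, J_mul_J, neg_neg])

variable {n : ℕ}

/-- `S ∈ ASp(n)`. -/
def IsASp (n : ℕ) (S : Matrix (Fin (2*n)) (Fin (2*n)) ℝ) : Prop :=
  Sᵀ * J n * S = J n ∨ Sᵀ * J n * S = -J n

theorem IsASp.abs_det {S : Matrix (Fin (2*n)) (Fin (2*n)) ℝ} (hS : IsASp n S) :
    |S.det| = 1 := by
  have h : (Sᵀ * J n * S).det = (J n).det := by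
    rcases hS with h | h <;> simp [h, det_neg]
  rw [det_mul, det_mul, det_transpose, mul_right_comm] at h
  exact (abs_eq zero_le_one).2 <| mul_self_eq_one_iff.1 <|
    mul_right_cancel₀ (isUnit_det_J n).ne_zero (h.trans (one_mul _).symm)

theorem IsASp.inv_transpose {S : Matrix (Fin (2*n)) (Fin (2*n)) ℝ} (hS : IsASp n S) :
    IsASp n S⁻¹ᵀ := by
  have h : S⁻¹ᵀᵀ * J n * S⁻¹ᵀ = -(Sᵀ * J n * S)⁻¹ := by
    rw [Matrix.mul_inv_rev, Matrix.mul_inv_rev, J_inv, transpose_transpose,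
      transpose_nonsing_inv]
    simp [Matrix.mul_assoc]
  have hnegJ : (-J n)⁻¹ = J n := inv_eq_right_inv (by rw [neg_mul, J_mul_J, neg_neg])
  rcases hS with hS | hS
  · exact .inl (by rw [h, hS, J_inv, neg_neg])
  · exact .inr (by rw [h, hS, hnegJ])

end SymplecticMatrix

section ChangeOfVariables

variable {d : ℕ} {M : Matrix (Fin d) (Fin d) ℝ}

theorem inv_mulVec_mulVec (hM : M.det ≠ 0) (z : Fin d → ℝ) : M⁻¹ *ᵥ (M *ᵥ z) = z := by
  rw [mulVec_mulVec, nonsing_inv_mul _ hM.isUnit, one_mulVec]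

theorem measurableEmbedding_mulVec (hM : M.det ≠ 0) :
    MeasurableEmbedding (M *ᵥ · : (Fin d → ℝ) → Fin d → ℝ) :=
  (LinearMap.equivOfDetNeZero (toLin' M) (by rwa [LinearMap.det_toLin'])).toContinuousLinearEquiv
    |>.toHomeomorph.measurableEmbedding

theorem map_mulVec_volume (hM : M.det ≠ 0) :
    Measure.map (M *ᵥ ·) volume = ENNReal.ofReal |M.det⁻¹| • (volume : Measure (Fin d → ℝ)) :=
  Real.map_matrix_volume_pi_eq_smul_volume_pi hM

theorem integral_comp_mulVec {E : Type*} [NormedAddCommGroup E] [NormedSpace ℝ E]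
    (hM : M.det ≠ 0) (g : (Fin d → ℝ) → E) :
    ∫ z, g (M *ᵥ z) = |M.det|⁻¹ • ∫ z, g z := by
  rw [← (measurableEmbedding_mulVec hM).integral_map, map_mulVec_volume hM,
    integral_smul_measure, ENNReal.toReal_ofReal (abs_nonneg _), abs_inv]

theorem integral_comp_mulVec_of_abs_det_eq_one {E : Type*} [NormedAddCommGroup E]
    [NormedSpace ℝ E] (hM : |M.det| = 1) (g : (Fin d → ℝ) → E) :
    ∫ z, g (M *ᵥ z) = ∫ z, g z := by
  rw [integral_comp_mulVec (abs_ne_zero.1 (hM ▸ one_ne_zero)), hM, inv_one, one_smul]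

theorem _root_.MeasureTheory.Integrable.comp_mulVec {E : Type*} [NormedAddCommGroup E]
    {g : (Fin d → ℝ) → E} (hg : Integrable g) (hM : M.det ≠ 0) :
    Integrable (fun z => g (M *ᵥ z)) := by
  rw [← Function.comp_def, ← (measurableEmbedding_mulVec hM).integrable_map_iff,
    map_mulVec_volume hM]
  exact hg.smul_measure ENNReal.ofReal_ne_top

end ChangeOfVariables

section Moments

variable {X : Type*} [MeasurableSpace X] {μ : Measure X} {ι : Type*} [Fintype ι]
  (A : Matrix ι ι ℝ)

theorem mulVec_apply_mul_eq_sum (v : ι → ℝ) (h : ℝ) (i : ι) :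
    (A *ᵥ v) i * h = ∑ k, A i k * (v k * h) := by
  simp only [mulVec, dotProduct, Finset.sum_mul, mul_assoc]

theorem mulVec_apply_mul_mulVec_apply_mul_eq_sum (v : ι → ℝ) (h : ℝ) (i j : ι) :
    (A *ᵥ v) i * (A *ᵥ v) j * h = ∑ k, ∑ l, A i k * A j l * (v k * v l * h) := by
  rw [mulVec, mulVec, dotProduct, dotProduct, Finset.sum_mul_sum, Finset.sum_mul]
  refine Finset.sum_congr rfl fun k _ => ?_
  rw [Finset.sum_mul]
  exact Finset.sum_congr rfl fun l _ => by ring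

variable {v : X → ι → ℝ} {H : X → ℝ}

theorem integrable_mulVec_apply_mul (hv : ∀ k, Integrable (fun x => v x k * H x) μ) (i : ι) :
    Integrable (fun x => (A *ᵥ v x) i * H x) μ := by
  simp only [mulVec_apply_mul_eq_sum]
  exact integrable_finsetSum _ fun k _ => (hv k).const_mul _

theorem integrable_mulVec_apply_mul_mulVec_apply_mul
    (hv : ∀ k l, Integrable (fun x => v x k * v x l * H x) μ) (i j : ι) :
    Integrable (fun x => (A *ᵥ v x) i * (A *ᵥ v x) j * H x) μ := by
  simp only [mulVec_apply_mul_mulVec_apply_mul_eq_sum]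
  exact integrable_finsetSum _ fun k _ => integrable_finsetSum _ fun l _ => (hv k l).const_mul _

theorem integral_mulVec_apply_mul (hv : ∀ k, Integrable (fun x => v x k * H x) μ) (i : ι) :
    ∫ x, (A *ᵥ v x) i * H x ∂μ = (A *ᵥ fun k => ∫ x, v x k * H x ∂μ) i := by
  simp only [mulVec_apply_mul_eq_sum]
  rw [integral_finsetSum _ fun k _ => (hv k).const_mul _]
  simp only [integral_const_mul, mulVec, dotProduct]

theorem integral_mulVec_apply_mul_mulVec_apply_mul
    (hv : ∀ k l, Integrable (fun x => v x k * v x l * H x) μ) (i j : ι) :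
    ∫ x, (A *ᵥ v x) i * (A *ᵥ v x) j * H x ∂μ
      = (A * Matrix.of (fun k l => ∫ x, v x k * v x l * H x ∂μ) * Aᵀ) i j := by
  simp only [mulVec_apply_mul_mulVec_apply_mul_eq_sum]
  rw [integral_finsetSum _ fun k _ => integrable_finsetSum _ fun l _ => (hv k l).const_mul _]
  simp only [mul_apply, transpose_apply, of_apply, Finset.sum_mul]
  rw [Finset.sum_comm]
  refine Finset.sum_congr rfl fun k _ => ?_
  rw [integral_finsetSum _ fun l _ => (hv k l).const_mul _]
  refine Finset.sum_congr rfl fun l _ => ?_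
  rw [integral_const_mul]
  ring

end Moments

section FiniteCovariance

variable {d : ℕ} {φ : (Fin d → ℝ) → ℝ}

theorem HasFiniteCov.const_mul (hφ : HasFiniteCov φ) (c : ℝ) :
    HasFiniteCov (fun z => c * φ z) := by
  obtain ⟨h0, h1, h2⟩ := hφ
  refine ⟨h0.const_mul c, fun i => ?_, fun i j => ?_⟩
  · simpa only [mul_left_comm] using (h1 i).const_mul c
  · simpa only [mul_left_comm] using (h2 i j).const_mul c

theorem HasFiniteCov.comp_mulVec (hφ : HasFiniteCov φ) {M : Matrix (Fin d) (Fin d) ℝ}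
    (hM : M.det ≠ 0) : HasFiniteCov (fun z => φ (M *ᵥ z)) := by
  obtain ⟨h0, h1, h2⟩ := hφ
  refine ⟨h0.comp_mulVec hM, fun i => ?_, fun i j => ?_⟩
  · simpa only [id, inv_mulVec_mulVec hM] using
      (integrable_mulVec_apply_mul M⁻¹ (v := id) h1 i).comp_mulVec hM
  · simpa only [id, inv_mulVec_mulVec hM] using
      (integrable_mulVec_apply_mul_mulVec_apply_mul M⁻¹ (v := id) h2 i j).comp_mulVec hM

theorem HasFiniteCov.of_integrable_weight
    (h : Integrable (fun z => (1 + ∑ k, z k ^ 2) * φ z)) : HasFiniteCov φ := by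
  have hw_pos (z : Fin d → ℝ) : 0 < 1 + ∑ k, z k ^ 2 := by positivity
  have hsq_le (z : Fin d → ℝ) (i : Fin d) : z i ^ 2 ≤ ∑ k, z k ^ 2 :=
    Finset.single_le_sum (fun k _ => sq_nonneg (z k)) (Finset.mem_univ i)
  -- `g φ = (g / w) (w φ)` with `|g / w| ≤ 1`, where `w` is the weight
  have of_le_weight (g : (Fin d → ℝ) → ℝ) (hg : Continuous g)
      (hgw : ∀ z, |g z| ≤ 1 + ∑ k, z k ^ 2) : Integrable (fun z => g z * φ z) := by
    have hcont : Continuous fun z => g z / (1 + ∑ k, z k ^ 2) :=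
      hg.div (by fun_prop) fun z => (hw_pos z).ne'
    refine (h.bdd_mul hcont.aestronglyMeasurable (c := 1) (ae_of_all _ fun z => ?_)).congr
      (ae_of_all _ fun z => ?_)
    · rw [norm_div, Real.norm_eq_abs, Real.norm_eq_abs, abs_of_pos (hw_pos z)]
      exact div_le_one_of_le₀ (hgw z) (hw_pos z).le
    · field_simp [(hw_pos z).ne']
  refine ⟨?_, fun i => of_le_weight _ (continuous_apply i) fun z => ?_,
    fun i j => of_le_weight _ ((continuous_apply i).mul (continuous_apply j)) fun z => ?_⟩
  · simpa using of_le_weight 1 continuous_const fun z => by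
      simpa using Finset.sum_nonneg fun k (_ : k ∈ Finset.univ) => sq_nonneg (z k)
  · nlinarith [hsq_le z i, sq_abs (z i), sq_nonneg (|z i| - 1)]
  · rw [abs_mul]
    nlinarith [hsq_le z i, hsq_le z j, sq_abs (z i), sq_abs (z j), sq_nonneg (|z i| - |z j|)]

theorem InM12.integrable_weight_norm_sq {f : (Fin d → ℝ) → ℂ} (hf : InM12 f) :
    Integrable (fun z => (1 + ∑ k, z k ^ 2) * ‖f z‖ ^ 2) := by
  refine hf.2.mono ((by fun_prop : Continuous fun z : Fin d → ℝ => 1 + ∑ k, z k ^ 2)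
    |>.aestronglyMeasurable.mul (hf.1.aestronglyMeasurable.norm.pow 2)) (ae_of_all _ fun z => ?_)
  have hw : 0 ≤ 1 + ∑ k, z k ^ 2 := by positivity
  simp only [norm_mul, Real.norm_eq_abs, abs_of_nonneg hw, abs_pow, abs_norm]
  gcongr
  rw [abs_of_nonneg (by positivity)]
  exact le_add_of_nonneg_right (by positivity)

theorem InM12.integrable_weight_norm_FT_sq {f : (Fin d → ℝ) → ℂ} (hf : InM12 f) :
    Integrable (fun z => (1 + ∑ k, z k ^ 2) * ‖FT f z‖ ^ 2) :=
  (hf.2.sub hf.integrable_weight_norm_sq).congr (ae_of_all _ fun z => by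
    simp only [Pi.sub_apply]; ring)

theorem hasFiniteCov_normSq2 {F : (Fin d → ℝ) → ℝ} (hF : InM12 (fun z => (F z : ℂ))) :
    HasFiniteCov (normSq2 F) := by
  convert (HasFiniteCov.of_integrable_weight hF.integrable_weight_norm_sq).const_mul
    (∫ w, F w ^ 2)⁻¹ using 1
  ext z
  simp [normSq2, div_eq_inv_mul]

end FiniteCovariance

section Covariance

theorem Cov_transpose {d : ℕ} (H : (Fin d → ℝ) → ℝ) : (Cov H)ᵀ = Cov H := by
  ext i j
  simp only [Cov, transpose_apply, of_apply, mul_comm (_ - meanVec H j)]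

variable {d : ℕ} {M : Matrix (Fin d) (Fin d) ℝ} {H : (Fin d → ℝ) → ℝ}

theorem meanVec_comp_mulVec (hM : M.det ≠ 0) (h1 : ∀ i, Integrable (fun z => z i * H z)) :
    meanVec (fun z => H (M *ᵥ z)) = M⁻¹ *ᵥ meanVec H := by
  have hnum (i : Fin d) : ∫ z, z i * H (M *ᵥ z)
      = |M.det|⁻¹ * (M⁻¹ *ᵥ fun k => ∫ w, w k * H w) i := by
    rw [← integral_mulVec_apply_mul _ h1, ← smul_eq_mul, ← integral_comp_mulVec hM]
    simp only [inv_mulVec_mulVec hM]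
  ext i
  rw [meanVec, hnum, integral_comp_mulVec hM, smul_eq_mul,
    mul_div_mul_left _ _ (by positivity)]
  simp only [meanVec, mulVec, dotProduct, Finset.sum_div, mul_div_assoc]

theorem Cov_comp_mulVec (hM : M.det ≠ 0) (hH : HasFiniteCov H) :
    Cov (fun z => H (M *ᵥ z)) = M⁻¹ * Cov H * M⁻¹ᵀ := by
  obtain ⟨h0, h1, h2⟩ := hH
  set m := meanVec H
  set C := Matrix.of fun k l => ∫ w, (w - m) k * (w - m) l * H w
  have hcentered (k l : Fin d) : Integrable (fun w => (w - m) k * (w - m) l * H w) := by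
    have hexpand : (fun w : Fin d → ℝ => (w - m) k * (w - m) l * H w) = fun w =>
        w k * w l * H w - m k * (w l * H w) - m l * (w k * H w) + m k * m l * H w := by
      ext w; simp only [Pi.sub_apply]; ring
    rw [hexpand]
    exact (((h2 k l).sub ((h1 l).const_mul _)).sub ((h1 k).const_mul _)).add (h0.const_mul _)
  have hnum (i j : Fin d) : ∫ z, (z i - (M⁻¹ *ᵥ m) i) * (z j - (M⁻¹ *ᵥ m) j) * H (M *ᵥ z)
      = |M.det|⁻¹ * (M⁻¹ * C * M⁻¹ᵀ) i j := by
    rw [← integral_mulVec_apply_mul_mulVec_apply_mul _ hcentered, ← smul_eq_mul,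
      ← integral_comp_mulVec hM]
    simp only [mulVec_sub, inv_mulVec_mulVec hM, Pi.sub_apply]
  have hCov : Cov H = (∫ w, H w)⁻¹ • C := by
    ext k l
    simp [Cov, C, m, div_eq_inv_mul]
  ext i j
  rw [Cov, of_apply, meanVec_comp_mulVec hM h1, hnum, integral_comp_mulVec hM, smul_eq_mul,
    mul_div_mul_left _ _ (by positivity), hCov, Matrix.mul_smul, Matrix.smul_mul,
    Matrix.smul_apply, smul_eq_mul, div_eq_inv_mul]

end Covariance

section SymplecticFourier

variable {n : ℕ} {hb : ℝ}

theorem symplForm_mulVec_mulVec {S T : Matrix (Fin (2*n)) (Fin (2*n)) ℝ}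
    (hST : Sᵀ * J n * T = J n) (ζ w : PS n) :
    symplForm n (T *ᵥ ζ) (S *ᵥ w) = symplForm n ζ w := by
  have h : Tᵀ * (J n)ᵀ * S = (J n)ᵀ := by
    simpa [transpose_mul, Matrix.mul_assoc] using congrArg transpose hST
  calc symplForm n (T *ᵥ ζ) (S *ᵥ w) = ζ ⬝ᵥ ((Tᵀ * (J n)ᵀ * S) *ᵥ w) := by
        rw [symplForm, ← mulVec_mulVec, ← mulVec_mulVec, dotProduct_mulVec ζ, vecMul_transpose]
    _ = symplForm n ζ w := by rw [h, symplForm]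

theorem symplFT_comp_mulVec {S T : Matrix (Fin (2*n)) (Fin (2*n)) ℝ} (hS : |S.det| = 1)
    (hST : Sᵀ * J n * T = J n) (f : PS n → ℂ) (ζ : PS n) :
    symplFT n hb (fun z => f (S *ᵥ z)) ζ = symplFT n hb f (T *ᵥ ζ) := by
  simp only [symplFT]
  conv_rhs => rw [← integral_comp_mulVec_of_abs_det_eq_one hS]
  simp only [symplForm_mulVec_mulVec hST]

theorem symplFT_neg_of_real (F : PS n → ℝ) (ζ : PS n) :
    symplFT n hb (fun z => (F z : ℂ)) (-ζ) = conj (symplFT n hb (fun z => (F z : ℂ)) ζ) := by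
  simp only [symplFT, symplForm, neg_dotProduct, Complex.real_smul, map_mul, Complex.conj_ofReal,
    ← integral_conj]
  congr 2 with z
  rw [← Complex.exp_conj]
  simp [neg_div]

theorem symplFT_eq_FT (f : PS n → ℂ) (ζ : PS n) :
    symplFT n hb f ζ = ((2 * π * hb) ^ n)⁻¹ • FT f (((2 * π * hb)⁻¹ • J n) *ᵥ ζ) := by
  simp only [symplFT, FT]
  congr 1
  refine integral_congr_ae (ae_of_all _ fun z => ?_)
  have hσ : ∑ i, z i * (((2 * π * hb)⁻¹ • J n) *ᵥ ζ) i
      = (2 * π * hb)⁻¹ * symplForm n ζ z := by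
    rw [smul_mulVec, symplForm, dotProduct_mulVec, vecMul_transpose, dotProduct_comm]
    simp [dotProduct, Finset.mul_sum, mul_left_comm]
  simp only [hσ]
  push_cast
  field_simp

theorem hasFiniteCov_nFTsq (hhb : hb ≠ 0) {F : PS n → ℝ} (hF : InM12 (fun z => (F z : ℂ))) :
    HasFiniteCov (nFTsq n hb F) := by
  have hM : ((2 * π * hb)⁻¹ • J n).det ≠ 0 := by
    rw [det_smul]
    exact mul_ne_zero (by simp [hhb, pi_ne_zero]) (isUnit_det_J n).ne_zero
  convert ((HasFiniteCov.of_integrable_weight hF.integrable_weight_norm_FT_sq).comp_mulVec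
    hM).const_mul (((2 * π * hb) ^ n)⁻¹ ^ 2 / ∫ w, F w ^ 2) using 1
  ext ζ
  simp only [nFTsq, symplFT_eq_FT, norm_smul, mul_pow, Real.norm_eq_abs, sq_abs]
  ring

end SymplecticFourier

section Invariance

variable {n : ℕ} {hb : ℝ} {F : PS n → ℝ} {S : Matrix (Fin (2*n)) (Fin (2*n)) ℝ}

theorem purity_comp_mulVec (hS : |S.det| = 1) :
    purity n hb (fun z => F (S *ᵥ z)) = purity n hb F := by
  rw [purity, purity, integral_comp_mulVec_of_abs_det_eq_one hS (fun w => F w ^ 2)]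

theorem normSq2_comp_mulVec (hS : |S.det| = 1) :
    normSq2 (fun z => F (S *ᵥ z)) = fun z => normSq2 F (S *ᵥ z) := by
  ext z
  rw [normSq2, normSq2, integral_comp_mulVec_of_abs_det_eq_one hS (fun w => F w ^ 2)]

theorem nFTsq_comp_mulVec (hS : IsASp n S) :
    nFTsq n hb (fun z => F (S *ᵥ z)) = fun ζ => nFTsq n hb F (S *ᵥ ζ) := by
  have hdet := hS.abs_det
  have hnorm (ζ : PS n) : ‖symplFT n hb (fun z => (F (S *ᵥ z) : ℂ)) ζ‖
      = ‖symplFT n hb (fun z => (F z : ℂ)) (S *ᵥ ζ)‖ := by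
    rcases hS with h | h
    · rw [symplFT_comp_mulVec hdet h (fun w => (F w : ℂ))]
    · -- `𝓕_σ(F ∘ S)(ζ) = 𝓕_σF(-Sζ)`, the complex conjugate of `𝓕_σF(Sζ)` as `F` is real
      rw [symplFT_comp_mulVec hdet (T := -S) (by rw [mul_neg, h, neg_neg]) (fun w => (F w : ℂ)),
        neg_mulVec, symplFT_neg_of_real, RCLike.norm_conj]
  ext ζ
  rw [nFTsq, nFTsq, hnorm, integral_comp_mulVec_of_abs_det_eq_one hdet (fun w => F w ^ 2)]

end Invariance

section UncertaintyMatrix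

variable {n : ℕ} {hb : ℝ}

theorem map_ofReal_mul {ι : Type*} [Fintype ι] (A B : Matrix ι ι ℝ) :
    (A * B).map (fun x => (x : ℂ)) = A.map (fun x => (x : ℂ)) * B.map (fun x => (x : ℂ)) :=
  Matrix.map_mul (f := Complex.ofRealHom)

theorem conjTranspose_map_ofReal {ι κ : Type*} (A : Matrix ι κ ℝ) :
    (A.map (fun x => (x : ℂ)))ᴴ = Aᵀ.map (fun x => (x : ℂ)) := by
  ext i j; simp

theorem RSmat_mul_mul_transpose {c : ℝ} {P : Matrix (Fin (2*n)) (Fin (2*n)) ℝ}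
    (hP : P * J n * Pᵀ = c • J n) (A : Matrix (Fin (2*n)) (Fin (2*n)) ℝ) :
    RSmat n (c * hb) (P * A * Pᵀ)
      = P.map (fun x => (x : ℂ)) * RSmat n hb A * (P.map (fun x => (x : ℂ)))ᴴ := by
  rw [RSmat, RSmat, conjTranspose_map_ofReal, Matrix.mul_add, Matrix.add_mul, Matrix.mul_smul,
    Matrix.smul_mul, Matrix.mul_smul, Matrix.smul_mul, Jc, ← map_ofReal_mul, ← map_ofReal_mul,
    ← map_ofReal_mul, ← map_ofReal_mul, hP]
  congr 1
  ext i j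
  simp only [Matrix.smul_apply, map_apply, smul_eq_mul, real_smul, ofReal_div, ofReal_mul,
    ofReal_ofNat]
  ring

theorem RSmat_transpose {A : Matrix (Fin (2*n)) (Fin (2*n)) ℝ} (hA : Aᵀ = A) :
    (RSmat n hb A)ᵀ = RSmat n (-hb) A := by
  rw [RSmat, RSmat, transpose_add, transpose_smul, transpose_smul, Jc, ← transpose_map,
    ← transpose_map, hA, J_transpose, neg_div, neg_smul, ← smul_neg]
  congr 3
  ext i j; simp

theorem SatisfiesRefinedRSUP.of_congr {F G : PS n → ℝ} (hF : SatisfiesRefinedRSUP n hb F)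
    {P : Matrix (Fin (2*n)) (Fin (2*n)) ℝ} (hP : IsASp n Pᵀ)
    (hpurity : purity n hb G = purity n hb F) (hCov : Cov G = P * Cov F * Pᵀ)
    (hCov₁ : Cov (normSq2 G) = P * Cov (normSq2 F) * Pᵀ)
    (hCov₂ : Cov (nFTsq n hb G) = P * Cov (nFTsq n hb F) * Pᵀ) :
    SatisfiesRefinedRSUP n hb G := by
  set A := Cov (normSq2 F) + (4 : ℝ)⁻¹ • Cov (nFTsq n hb F)
  have hA : Cov (normSq2 G) + (4 : ℝ)⁻¹ • Cov (nFTsq n hb G) = P * A * Pᵀ := by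
    rw [hCov₁, hCov₂, Matrix.mul_add, Matrix.add_mul, Matrix.mul_smul, Matrix.smul_mul]
  obtain ⟨hle, hnonneg⟩ := hF
  simp only [SatisfiesRefinedRSUP, refinedMat, hpurity, hCov, hA]
  set Q := P.map (fun x => (x : ℂ))
  have hsmul (c : ℝ) (X : Matrix (Fin (2*n)) (Fin (2*n)) ℂ) :
      c • (Q * X * Qᴴ) = Q * (c • X) * Qᴴ := by
    rw [Matrix.mul_smul, Matrix.smul_mul]
  rw [IsASp, transpose_transpose] at hP
  rcases hP with hP | hP
  · have hRS (X : Matrix (Fin (2*n)) (Fin (2*n)) ℝ) :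
        RSmat n hb (P * X * Pᵀ) = Q * RSmat n hb X * Qᴴ := by
      simpa using RSmat_mul_mul_transpose (hb := hb) (c := 1) (by rwa [one_smul]) X
    rw [hRS, hRS, hsmul, ← Matrix.sub_mul, ← Matrix.mul_sub]
    exact ⟨hle.mul_mul_conjTranspose_same Q, hnonneg.mul_mul_conjTranspose_same Q⟩
  · -- an antisymplectic congruence reverses the sign of `J`, which transposition restores
    have hRS (X : Matrix (Fin (2*n)) (Fin (2*n)) ℝ) (hX : Xᵀ = X) :
        RSmat n hb (P * X * Pᵀ) = Q * (RSmat n hb X)ᵀ * Qᴴ := by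
      simpa [RSmat_transpose hX] using
        RSmat_mul_mul_transpose (hb := -hb) (c := -1) (by rwa [neg_one_smul]) X
    have hAsymm : Aᵀ = A := by simp only [A, transpose_add, transpose_smul, Cov_transpose]
    rw [hRS _ (Cov_transpose F), hRS _ hAsymm, hsmul, ← transpose_smul, ← Matrix.sub_mul,
      ← Matrix.mul_sub, ← transpose_sub]
    exact ⟨hle.transpose.mul_mul_conjTranspose_same Q,
      hnonneg.transpose.mul_mul_conjTranspose_same Q⟩

end UncertaintyMatrix

end RSUP

/-- If a real function `F ∈ M¹₂(ℝ^{2n})` with finite covariance matrix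
satisfies the refined Robertson–Schrödinger uncertainty principle, then for every
`S ∈ ASp(n)` (i.e. `SᵀJS = J` or `SᵀJS = −J`), the function `F ∘ S` also satisfies the
refined Robertson–Schrödinger uncertainty principle. -/
theorem refined_RSUP_symplectic_covariance
    (n : ℕ) (hb : ℝ) (hhb : 0 < hb)
    (F : PS n → ℝ)
    (hM12 : InM12 (fun z => (F z : ℂ))) (hcov : HasFiniteCov F)
    (hRSUP : SatisfiesRefinedRSUP n hb F)
    (S : Matrix (Fin (2*n)) (Fin (2*n)) ℝ)
    (hS : Sᵀ * J n * S = J n ∨ Sᵀ * J n * S = -(J n)) :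
    SatisfiesRefinedRSUP n hb (fun z => F (S *ᵥ z)) := by
  have hASp : IsASp n S := hS
  have hdet : S.det ≠ 0 := abs_ne_zero.1 (hASp.abs_det ▸ one_ne_zero)
  refine hRSUP.of_congr hASp.inv_transpose (purity_comp_mulVec hASp.abs_det)
    (Cov_comp_mulVec hdet hcov) ?_ ?_
  · rw [normSq2_comp_mulVec hASp.abs_det]
    exact Cov_comp_mulVec hdet (hasFiniteCov_normSq2 hM12)
  · rw [nFTsq_comp_mulVec hASp]
    exact Cov_comp_mulVec hdet (hasFiniteCov_nFTsq hhb.ne' hM12)
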